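/- For N even, the kernel of −D⁰·D⁰ acting on periodic scalar grid functions on an N×N periodic grid is 4-dimensional, spanned by the Fourier modes ψ_{rs}(x_{ij}) = ω^{ir+js} with r,s ∈ {0, N/2}, where ω is a primitive N-th root of unity. -/

import Mathlib

/-!
Since `D⁰_α D⁰_α ψ (x) = (ψ(x + 2e_α) + ψ(x - 2e_α) - 2ψ(x)) / (2h)²`, summation by parts gives
`⟨ψ, D⁰·D⁰ ψ⟩ = -(2h)⁻² ∑_α ∑_x |ψ(x + 2e_α) - ψ(x)|²`, so the kernel consists exactly of the
functions with periods `2e₁` and `2e₂`. Such a function is determined by its values on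
`{0, 1}²`, so this space has dimension at most 4, and it contains the four modes `ψ_{rs}`,
`r, s ∈ {0, N/2}`, which are the `±1` checkerboard patterns and are linearly independent.
-/

/-- The periodic `N × N` grid, indexed by `ZMod N × ZMod N`. -/
abbrev Grid (N : ℕ) := ZMod N × ZMod N

/-- Unit index shifts in the two coordinate directions. -/
def gvec (N : ℕ) : Fin 2 → Grid N := ![(1, 0), (0, 1)]

/-- Centered difference operator `D⁰_α` (complex-valued), grid spacing `h`. -/
noncomputable def D0c {N : ℕ} (h : ℝ) (α : Fin 2) (f : Grid N → ℂ) : Grid N → ℂ :=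
  fun x => (f (x + gvec N α) - f (x - gvec N α)) / (2 * (h : ℂ))

/-- The Fourier mode `ψ_{rs}(x_{ij}) = ω^{ir + js}`. -/
def fmode {N : ℕ} (ω : ℂ) (r s : ℕ) : Grid N → ℂ :=
  fun x => ω ^ (x.1.val * r + x.2.val * s)

open Function Module ComplexConjugate

section SecondDifference

variable {G 𝕜 : Type*} [AddCommGroup G] [RCLike 𝕜]

def secondDiff (f : G → 𝕜) (v x : G) : 𝕜 := f (x + v) + f (x - v) - 2 * f x

lemma Function.Periodic.secondDiff_eq_zero {f : G → 𝕜} {v : G} (hf : Periodic f v) (x : G) :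
    secondDiff f v x = 0 := by
  rw [secondDiff, hf x, hf.sub_eq x]
  ring

variable [Fintype G]

lemma sum_conj_mul_secondDiff (f : G → 𝕜) (v : G) :
    ∑ x, conj (f x) * secondDiff f v x = -∑ x, ((‖f (x + v) - f x‖ ^ 2 : ℝ) : 𝕜) := by
  have hshift (F : G → 𝕜) : ∑ x, F (x + v) = ∑ x, F x :=
    Fintype.sum_equiv (Equiv.addRight v) _ _ fun _ => rfl
  have hback : ∑ x, conj (f x) * f (x - v) = ∑ x, conj (f (x + v)) * f x := by
    simpa using (hshift fun x => conj (f x) * f (x - v)).symm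
  have hnorm : ∑ x, conj (f (x + v)) * f (x + v) = ∑ x, conj (f x) * f x :=
    hshift fun x => conj (f x) * f x
  have hpoint (x : G) : conj (f x) * secondDiff f v x + ((‖f (x + v) - f x‖ ^ 2 : ℝ) : 𝕜) =
      (conj (f x) * f (x - v) - conj (f (x + v)) * f x) +
        (conj (f (x + v)) * f (x + v) - conj (f x) * f x) := by
    rw [RCLike.ofReal_pow, ← RCLike.conj_mul, map_sub, secondDiff]
    ring
  rw [eq_neg_iff_add_eq_zero, ← Finset.sum_add_distrib, Finset.sum_congr rfl fun x _ => hpoint x,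
    Finset.sum_add_distrib, Finset.sum_sub_distrib, Finset.sum_sub_distrib, hback, hnorm]
  simp

lemma periodic_of_forall_sum_secondDiff_eq_zero {ι : Type*} [Fintype ι] {f : G → 𝕜} {v : ι → G}
    (hf : ∀ x, ∑ i, secondDiff f (v i) x = 0) (i : ι) : Periodic f (v i) := by
  have hsum : ∑ j, ∑ x, ‖f (x + v j) - f x‖ ^ 2 = 0 := by
    have hpairing : ∑ x, conj (f x) * ∑ j, secondDiff f (v j) x = 0 := by simp [hf]
    simp_rw [Finset.mul_sum] at hpairing
    rw [Finset.sum_comm] at hpairing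
    simp_rw [sum_conj_mul_secondDiff, Finset.sum_neg_distrib, neg_eq_zero] at hpairing
    exact_mod_cast hpairing
  have hnonneg : ∀ j x, 0 ≤ ‖f (x + v j) - f x‖ ^ 2 := fun _ _ => by positivity
  intro x
  have hi := (Finset.sum_eq_zero_iff_of_nonneg fun j _ => Finset.sum_nonneg fun x _ => hnonneg j x).1
    hsum i (Finset.mem_univ i)
  have hix := (Finset.sum_eq_zero_iff_of_nonneg fun x _ => hnonneg i x).1 hi x (Finset.mem_univ x)
  simpa [sub_eq_zero] using hix

lemma forall_sum_secondDiff_eq_zero_iff {ι : Type*} [Fintype ι] {f : G → 𝕜} {v : ι → G} :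
    (∀ x, ∑ i, secondDiff f (v i) x = 0) ↔ ∀ i, Periodic f (v i) :=
  ⟨periodic_of_forall_sum_secondDiff_eq_zero, fun hf x =>
    Finset.sum_eq_zero fun i _ => (hf i).secondDiff_eq_zero x⟩

end SecondDifference

lemma IsPrimitiveRoot.pow_div_two_eq_neg_one {R : Type*} [CommRing R] [NoZeroDivisors R] {ζ : R}
    {n : ℕ} (hζ : IsPrimitiveRoot ζ n) (hn : Even n) (hn₀ : n ≠ 0) : ζ ^ (n / 2) = -1 :=
  (hζ.pow (Nat.pos_of_ne_zero hn₀) (Nat.div_two_mul_two_of_even hn).symm).eq_neg_one_of_two_right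

def periodicFunctions (R : Type*) {G M ι : Type*} [Semiring R] [Add G] [AddCommMonoid M]
    [Module R M] (v : ι → G) : Submodule R (G → M) where
  carrier := {f | ∀ i, Periodic f (v i)}
  add_mem' hf hg i := (hf i).add (hg i)
  zero_mem' _ := fun _ => rfl
  smul_mem' c _ hf i := (hf i).smul c

section GridFunctions

variable {N : ℕ}

lemma D0c_D0c_apply (h : ℝ) (α : Fin 2) (f : Grid N → ℂ) (x : Grid N) :
    D0c h α (D0c h α f) x = secondDiff f (2 • gvec N α) x / (2 * h) ^ 2 := by
  simp only [D0c, secondDiff, two_nsmul, add_sub_cancel_right, sub_add_cancel, add_assoc,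
    sub_sub]
  ring

lemma neg_sum_D0c_D0c_eq_zero_iff [NeZero N] {h : ℝ} (hh : h ≠ 0) {f : Grid N → ℂ} :
    (∀ x, -(∑ α, D0c h α (D0c h α f) x) = 0) ↔ ∀ α, Periodic f (2 • gvec N α) := by
  have h2 : (2 * h : ℂ) ^ 2 ≠ 0 := by simpa using hh
  simp only [D0c_D0c_apply, ← Finset.sum_div, neg_eq_zero, div_eq_zero_iff, h2, or_false]
  exact forall_sum_secondDiff_eq_zero_iff

lemma apply_eq_apply_val_mod_two [NeZero N] {M : Type*} {f : Grid N → M}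
    (hf : ∀ α, Periodic f (2 • gvec N α)) (x : Grid N) :
    f x = f (((x.1.val % 2 : ℕ) : ZMod N), ((x.2.val % 2 : ℕ) : ZMod N)) := by
  have hsplit (a : ZMod N) : a = ((a.val % 2 : ℕ) : ZMod N) + ((a.val / 2 : ℕ) : ZMod N) * 2 := by
    conv_lhs => rw [← ZMod.natCast_zmod_val a, ← Nat.mod_add_div' a.val 2]
    push_cast
    rfl
  have hx : x = (((x.1.val % 2 : ℕ) : ZMod N), ((x.2.val % 2 : ℕ) : ZMod N))
      + (x.1.val / 2) • (2 • gvec N 0) + (x.2.val / 2) • (2 • gvec N 1) := by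
    ext <;> simpa [gvec] using hsplit _
  conv_lhs => rw [hx, (hf 1).nsmul, (hf 0).nsmul]

lemma finrank_periodicFunctions_two_nsmul_gvec_le (K : Type*) [Field K] [NeZero N] :
    finrank K (periodicFunctions K fun α => 2 • gvec N α : Submodule K (Grid N → K)) ≤ 4 := by
  set P : Submodule K (Grid N → K) := periodicFunctions K fun α => 2 • gvec N α
  let restrict : (Grid N → K) →ₗ[K] (Fin 2 × Fin 2 → K) :=
    LinearMap.funLeft K K fun p => (((p.1 : ℕ) : ZMod N), ((p.2 : ℕ) : ZMod N))
  have hinj : Injective (restrict ∘ₗ P.subtype) := by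
    rintro ⟨f, hf⟩ ⟨g, hg⟩ hfg
    ext x
    change f x = g x
    rw [apply_eq_apply_val_mod_two hf, apply_eq_apply_val_mod_two hg]
    exact congrFun hfg (⟨x.1.val % 2, Nat.mod_lt _ two_pos⟩, ⟨x.2.val % 2, Nat.mod_lt _ two_pos⟩)
  simpa using LinearMap.finrank_le_finrank_of_injective hinj

variable {ω : ℂ}

lemma pow_zmod_val_add {M : Type*} [Monoid M] [NeZero N] {ζ : M} (hζ : ζ ^ N = 1)
    (a b : ZMod N) : ζ ^ (a + b).val = ζ ^ a.val * ζ ^ b.val := by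
  rw [ZMod.val_add, ← pow_eq_pow_mod _ hζ, pow_add]

lemma fmode_apply (r s : ℕ) (x : Grid N) :
    fmode ω r s x = (ω ^ r) ^ x.1.val * (ω ^ s) ^ x.2.val := by
  rw [fmode, pow_add, pow_mul', pow_mul']

lemma fmode_add [NeZero N] (hω : ω ^ N = 1) (r s : ℕ) (x y : Grid N) :
    fmode ω r s (x + y) = fmode ω r s x * fmode ω r s y := by
  have hpow (k : ℕ) : (ω ^ k) ^ N = 1 := by rw [pow_right_comm, hω, one_pow]
  simp only [fmode_apply, Prod.fst_add, Prod.snd_add, pow_zmod_val_add (hpow _)]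
  ring

lemma fmode_sq {r s : ℕ} (hr : (ω ^ r) ^ 2 = 1) (hs : (ω ^ s) ^ 2 = 1) (x : Grid N) :
    fmode ω r s x ^ 2 = 1 := by
  rw [fmode_apply, mul_pow, pow_right_comm _ x.1.val, pow_right_comm _ x.2.val, hr, hs, one_pow,
    one_pow, one_mul]

lemma fmode_mem_periodicFunctions [NeZero N] (hω : ω ^ N = 1) {r s : ℕ} (hr : (ω ^ r) ^ 2 = 1)
    (hs : (ω ^ s) ^ 2 = 1) : fmode ω r s ∈ periodicFunctions ℂ fun α => 2 • gvec N α := by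
  intro α x
  change fmode ω r s (x + 2 • gvec N α) = _
  rw [fmode_add hω, two_nsmul, fmode_add hω, ← sq, fmode_sq hr hs, mul_one]

lemma linearIndependent_fmode (hω : ω ^ (N / 2) = -1) :
    LinearIndependent ℂ ![fmode (N := N) ω 0 0, fmode ω 0 (N / 2), fmode ω (N / 2) 0,
      fmode ω (N / 2) (N / 2)] := by
  have hN : 1 < N := by
    by_contra! hN
    have : N / 2 = 0 := by omega
    norm_num [this] at hω
  have hval : (1 : ZMod N).val = 1 := by
    rw [ZMod.val_one_eq_one_mod, Nat.mod_eq_of_lt hN]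
  rw [Fintype.linearIndependent_iff]
  intro c hc
  have e := fun p : Grid N => congrFun hc p
  simp only [Fin.sum_univ_four, Finset.sum_apply] at e
  have e00 := e (0, 0)
  have e01 := e (0, 1)
  have e10 := e (1, 0)
  have e11 := e (1, 1)
  simp only [Matrix.cons_val_zero, Matrix.cons_val_one, Matrix.cons_val, Pi.smul_apply,
    Pi.zero_apply, smul_eq_mul, fmode, ZMod.val_zero, hval, zero_mul, mul_zero, one_mul, mul_one,
    zero_add, add_zero, pow_zero, pow_add, hω, mul_neg, neg_neg] at e00 e01 e10 e11
  intro i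
  fin_cases i
  · show c 0 = 0
    linear_combination (e00 + e01 + e10 + e11) / 4
  · show c 1 = 0
    linear_combination (e00 - e01 + e10 - e11) / 4
  · show c 2 = 0
    linear_combination (e00 + e01 - e10 - e11) / 4
  · show c 3 = 0
    linear_combination (e00 - e01 - e10 + e11) / 4

lemma finrank_span_fmode (hω : ω ^ (N / 2) = -1) :
    finrank ℂ (Submodule.span ℂ ({fmode ω 0 0, fmode ω 0 (N / 2), fmode ω (N / 2) 0,
      fmode ω (N / 2) (N / 2)} : Set (Grid N → ℂ))) = 4 := by
  have hrange : Set.range ![fmode ω 0 0, fmode ω 0 (N / 2), fmode ω (N / 2) 0,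
      fmode ω (N / 2) (N / 2)] = ({fmode ω 0 0, fmode ω 0 (N / 2), fmode ω (N / 2) 0,
      fmode ω (N / 2) (N / 2)} : Set (Grid N → ℂ)) := by
    simp only [Matrix.range_cons, Matrix.range_empty, Set.union_empty, Set.singleton_union]
  rw [← hrange, finrank_span_eq_card (linearIndependent_fmode hω), Fintype.card_fin]

lemma span_fmode_le_periodicFunctions [NeZero N] (hω : ω ^ N = 1) (hhalf : ω ^ (N / 2) = -1) :
    Submodule.span ℂ ({fmode ω 0 0, fmode ω 0 (N / 2), fmode ω (N / 2) 0,
      fmode ω (N / 2) (N / 2)} : Set (Grid N → ℂ)) ≤ periodicFunctions ℂ fun α => 2 • gvec N α := by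
  have hsq : ∀ r ∈ ({0, N / 2} : Set ℕ), (ω ^ r) ^ 2 = 1 := by
    rintro r (rfl | rfl) <;> simp [hhalf]
  rw [Submodule.span_le]
  rintro _ (rfl | rfl | rfl | rfl) <;>
    exact fmode_mem_periodicFunctions hω (hsq _ (by simp)) (hsq _ (by simp))

end GridFunctions

/-- For `N` even, the kernel of `−D⁰·D⁰` on periodic scalar grid functions is
4-dimensional, spanned by the Fourier modes `ψ_{rs}` with `r, s ∈ {0, N/2}`,
`ω` a primitive `N`-th root of unity. -/
theorem ker_centered_laplacian_four_dimensional {N : ℕ} [NeZero N]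
    (hN : Even N) {h : ℝ} (hh : h ≠ 0) {ω : ℂ} (hω : IsPrimitiveRoot ω N) :
    {ψ : Grid N → ℂ | ∀ x, -(∑ α : Fin 2, D0c h α (D0c h α ψ) x) = 0}
      = ↑(Submodule.span ℂ
          ({fmode ω 0 0, fmode ω 0 (N / 2), fmode ω (N / 2) 0,
            fmode ω (N / 2) (N / 2)} : Set (Grid N → ℂ)))
    ∧ Module.finrank ℂ (Submodule.span ℂ
          ({fmode ω 0 0, fmode ω 0 (N / 2), fmode ω (N / 2) 0,
            fmode ω (N / 2) (N / 2)} : Set (Grid N → ℂ))) = 4 := by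
  have hhalf : ω ^ (N / 2) = -1 := hω.pow_div_two_eq_neg_one hN (NeZero.ne N)
  have hrank := finrank_span_fmode hhalf
  have hker : {ψ : Grid N → ℂ | ∀ x, -(∑ α : Fin 2, D0c h α (D0c h α ψ) x) = 0} =
      (periodicFunctions ℂ fun α => 2 • gvec N α : Submodule ℂ (Grid N → ℂ)) :=
    Set.ext fun _ => neg_sum_D0c_D0c_eq_zero_iff hh
  refine ⟨?_, hrank⟩
  rw [hker, Submodule.eq_of_le_of_finrank_le (span_fmode_le_periodicFunctions hω.pow_eq_one hhalf)
    ((finrank_periodicFunctions_two_nsmul_gvec_le ℂ).trans hrank.ge)]
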